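/- For every p ∈ (0,1), the function a(p) = λ_r(p)/λ_PF(p) is strictly decreasing in p on (0,1). -/
import Mathlib


open Real Set

noncomputable def lamR (p : ℝ) : ℝ := (1 - p - Real.sqrt ((1 - p) * (3 * p + 1))) / 2
noncomputable def lamPF (p : ℝ) : ℝ := (1 - p + Real.sqrt ((1 - p) * (3 * p + 1))) / 2
noncomputable def evRatio (p : ℝ) : ℝ := lamR p / lamPF p

theorem evRatio_strictAntiOn : StrictAntiOn evRatio (Ioo (0 : ℝ) 1) := by
  rintro p ⟨hp0, hp1⟩ q ⟨hq0, hq1⟩ hpq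
  have hup : (0:ℝ) < 1 - p := by linarith
  have huq : (0:ℝ) < 1 - q := by linarith
  set sp := Real.sqrt ((1 - p) * (3 * p + 1)) with hsp
  set sq := Real.sqrt ((1 - q) * (3 * q + 1)) with hsq
  have hspp : 0 < sp := Real.sqrt_pos.mpr (by nlinarith)
  have hsqp : 0 < sq := Real.sqrt_pos.mpr (by nlinarith)
  have hsp2 : sp ^ 2 = (1 - p) * (3 * p + 1) := Real.sq_sqrt (by nlinarith)
  have hsq2 : sq ^ 2 = (1 - q) * (3 * q + 1) := Real.sq_sqrt (by nlinarith)
  have key : (1 - q) * sp < (1 - p) * sq := by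
    have h1 : ((1 - q) * sp) ^ 2 < ((1 - p) * sq) ^ 2 := by
      rw [mul_pow, mul_pow, hsp2, hsq2]
      nlinarith [mul_pos (mul_pos hup huq) (show (0:ℝ) < q - p by linarith)]
    exact lt_of_pow_lt_pow_left₀ 2 (le_of_lt (mul_pos hup hsqp)) h1
  have hdp : 0 < (1 - p + sp) / 2 := by positivity
  have hdq : 0 < (1 - q + sq) / 2 := by positivity
  unfold evRatio lamR lamPF
  rw [← hsp, ← hsq, div_lt_div_iff₀ hdq hdp]
  nlinarith [key]
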